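/- Let L be a (k,A)-Lie algebra with enveloping algebra U. If P is a right U-module which is finitely generated projective (e.g. free of finite rank) as an A-module, then P ⊗_A U, equipped with the right U-module structure (p ⊗ Q)·λ = pλ ⊗ Q − p ⊗ λQ (λ ∈ L), is a projective right U-module (locally free of finite rank in the sheaf setting). -/

import Mathlib

set_option linter.unusedSectionVars false
set_option maxHeartbeats 1000000
set_option synthInstance.maxHeartbeats 400000


open scoped TensorProduct
open MulOpposite

/-- A `(k,A)`-Lie algebra (Lie–Rinehart algebra): a `k`-Lie algebra `L` which is an
`A`-module, together with an `A`-linear anchor map `L → Der_k(A)` which is a morphism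
of Lie algebras and satisfies the Leibniz rule. -/
class LieRinehart (k A L : Type) [CommRing k] [CommRing A] [Algebra k A]
    [LieRing L] [LieAlgebra k L] [Module A L] [IsScalarTower k A L] where
  anchor : L →ₗ[A] Derivation k A A
  anchor_lie : ∀ x y : L, anchor ⁅x, y⁆ = ⁅anchor x, anchor y⁆
  leibniz : ∀ (a : A) (x y : L), ⁅x, a • y⁆ = a • ⁅x, y⁆ + (anchor x a) • y

/-- The action of an element of `L` on `A` through the anchor map. -/
def anch (k : Type) {A L : Type} [CommRing k] [CommRing A] [Algebra k A]
    [LieRing L] [LieAlgebra k L] [Module A L] [IsScalarTower k A L]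
    [LieRinehart k A L] (x : L) (a : A) : A :=
  LieRinehart.anchor (k := k) x a

/-- A realization of the enveloping algebra `U(L)` of a Lie–Rinehart algebra `L` over
`(k,A)` : a `k`-algebra `U` with structure maps from `A` and `L`, satisfying the
defining relations of `U(L)` and its universal property. -/
structure EnvAlg (k A L U : Type) [CommRing k] [CommRing A] [Algebra k A]
    [LieRing L] [LieAlgebra k L] [Module A L] [IsScalarTower k A L]
    [LieRinehart k A L] [Ring U] [Algebra k U] where
  ιA : A →ₐ[k] U
  ιL : L →ₗ[k] U
  commA : ∀ (x : L) (a : A), ιL x * ιA a = ιA a * ιL x + ιA (anch k x a)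
  commL : ∀ x y : L, ιL x * ιL y = ιL y * ιL x + ιL ⁅x, y⁆
  smul_def : ∀ (a : A) (x : L), ιL (a • x) = ιA a * ιL x
  universal : ∀ (B : Type) [Ring B] [Algebra k B] (gA : A →ₐ[k] B) (gL : L →ₗ[k] B),
    (∀ (x : L) (a : A), gL x * gA a = gA a * gL x + gA (anch k x a)) →
    (∀ x y : L, gL x * gL y = gL y * gL x + gL ⁅x, y⁆) →
    (∀ (a : A) (x : L), gL (a • x) = gA a * gL x) →
    ∃! h : U →ₐ[k] B, (∀ a, h (ιA a) = gA a) ∧ (∀ x, h (ιL x) = gL x)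

/-- Left multiplication by an element of a (possibly noncommutative) algebra `U`
on a `U`-module, as a `k`-linear map. -/
def lact {k U M : Type} [CommRing k] [Ring U] [Algebra k U] [AddCommGroup M] [Module k M]
    [Module U M] [IsScalarTower k U M] (u : U) : M →ₗ[k] M where
  toFun m := u • m
  map_add' := smul_add u
  map_smul' c m := by
    rw [RingHom.id_apply, ← algebraMap_smul U c m, ← algebraMap_smul U c (u • m),
      smul_smul, smul_smul, Algebra.commutes]

/-- A left `U(L)`-module structure on an `A`-module `M`, described equivalently as a flat
`L`-connection: an `A`-linear map `∇ : L → End_k(M)` satisfying the Leibniz rule and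
preserving brackets. -/
structure LRConnection (k A L M : Type) [CommRing k] [CommRing A] [Algebra k A]
    [LieRing L] [LieAlgebra k L] [Module A L] [IsScalarTower k A L] [LieRinehart k A L]
    [AddCommGroup M] [Module k M] [Module A M] [IsScalarTower k A M] where
  nabla : L →ₗ[A] (M →ₗ[k] M)
  leibniz : ∀ (x : L) (a : A) (m : M), nabla x (a • m) = a • nabla x m + (anch k x a) • m
  flat : ∀ x y : L, nabla ⁅x, y⁆ = nabla x ∘ₗ nabla y - nabla y ∘ₗ nabla x

/-- The relations defining `P ⊗_A U` inside `P ⊗ₖ U` (for `P` a right `U`-module):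
`a•p ⊗ u = p ⊗ ιA(a)·u`. -/
def relPU (k A L U P : Type) [CommRing k] [CommRing A] [Algebra k A]
    [LieRing L] [LieAlgebra k L] [Module A L] [IsScalarTower k A L] [LieRinehart k A L]
    [Ring U] [Algebra k U] [AddCommGroup P] [Module k P] [Module A P]
    (e : EnvAlg k A L U) : Submodule k (P ⊗[k] U) :=
  Submodule.span k
    {z | ∃ (a : A) (p : P) (u : U),
        z = (a • p) ⊗ₜ[k] u - p ⊗ₜ[k] (e.ιA a * u)}


-- ==================== auxiliary development ====================

@[simp] lemma lact_apply {k U M : Type} [CommRing k] [Ring U] [Algebra k U] [AddCommGroup M]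
    [Module k M] [Module U M] [IsScalarTower k U M] (u : U) (m : M) :
    lact (k := k) u m = u • m := rfl

namespace TTP

noncomputable section

variable {k A L U P : Type} [CommRing k] [CommRing A] [Algebra k A]
  [LieRing L] [LieAlgebra k L] [Module A L] [IsScalarTower k A L] [LieRinehart k A L]
  [Ring U] [Algebra k U]
  [AddCommGroup P] [Module k P] [Module A P] [IsScalarTower k A P]
  [Module Uᵐᵒᵖ P] [IsScalarTower k Uᵐᵒᵖ P]
  (e : EnvAlg k A L U)

local notation "QQ" => ((P ⊗[k] U) ⧸ relPU k A L U P e)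
local notation "rel" => relPU k A L U P e

lemma op_smul_op_smul (v w : U) (p : P) : op v • op w • p = op (w * v) • p := by
  rw [smul_smul, ← op_mul]

/-- generator of the relation module -/
def gen (a : A) (p : P) (u : U) : P ⊗[k] U := (a • p) ⊗ₜ[k] u - p ⊗ₜ[k] (e.ιA a * u)

lemma gen_mem (a : A) (p : P) (u : U) : gen e a p u ∈ rel :=
  Submodule.subset_span ⟨a, p, u, rfl⟩

lemma mk_rel (a : A) (p : P) (u : U) :
    (Submodule.Quotient.mk ((a • p) ⊗ₜ[k] u) : QQ) =
      Submodule.Quotient.mk (p ⊗ₜ[k] (e.ιA a * u)) := by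
  rw [Submodule.Quotient.eq]
  exact gen_mem e a p u

/-- the twisted action of `a : A` on representatives -/
def tGA (a : A) : P ⊗[k] U →ₗ[k] P ⊗[k] U :=
  TensorProduct.map (lact (M := P) a) LinearMap.id

/-- the twisted action of `x : L` on representatives -/
def tGL (x : L) : P ⊗[k] U →ₗ[k] P ⊗[k] U :=
  TensorProduct.map (lact (M := P) (op (e.ιL x))) LinearMap.id -
    TensorProduct.map LinearMap.id (LinearMap.mulLeft k (e.ιL x))

/-- right multiplication by `w : U` on representatives -/
def tRR (w : U) : P ⊗[k] U →ₗ[k] P ⊗[k] U :=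
  TensorProduct.map LinearMap.id (LinearMap.mulRight k w)

@[simp] lemma tGA_tmul (a : A) (p : P) (u : U) :
    tGA (k := k) (U := U) (P := P) a (p ⊗ₜ[k] u) = (a • p) ⊗ₜ[k] u := by
  simp [tGA]

@[simp] lemma tGL_tmul (x : L) (p : P) (u : U) :
    tGL e x (p ⊗ₜ[k] u) = (op (e.ιL x) • p) ⊗ₜ[k] u - p ⊗ₜ[k] (e.ιL x * u) := by
  simp [tGL]

@[simp] lemma tRR_tmul (w : U) (p : P) (u : U) :
    tRR (k := k) (P := P) w (p ⊗ₜ[k] u) = p ⊗ₜ[k] (u * w) := by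
  simp [tRR]

variable (hPA : ∀ (a : A) (p : P), op (e.ιA a) • p = a • p)

include hPA in
/-- the key commutation identity for the right action of `L` on `P` against `A` -/
lemma key1 (x : L) (a : A) (p : P) :
    op (e.ιL x) • (a • p) = a • (op (e.ιL x) • p) - (anch k x a) • p := by
  have h1 : op (e.ιL x) • (a • p) = op (e.ιA a * e.ιL x) • p := by
    rw [← hPA a p, op_smul_op_smul]
  have h2 : e.ιA a * e.ιL x = e.ιL x * e.ιA a - e.ιA (anch k x a) := by
    rw [e.commA x a]; abel
  rw [h1, h2, op_sub, sub_smul, ← op_smul_op_smul, hPA, hPA]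

lemma tGA_rel (a : A) : rel ≤ Submodule.comap (tGA (k := k) (U := U) (P := P) a) rel := by
  rw [relPU, Submodule.span_le]
  rintro _ ⟨b, p, u, rfl⟩
  simp only [SetLike.mem_coe, Submodule.mem_comap, map_sub, tGA_tmul]
  have h : (a • b • p) ⊗ₜ[k] u - (a • p) ⊗ₜ[k] (e.ιA b * u) = gen e b (a • p) u := by
    rw [gen, smul_comm]
  rw [h]
  exact gen_mem e b (a • p) u

lemma tRR_rel (w : U) : rel ≤ Submodule.comap (tRR (k := k) (P := P) w) rel := by
  rw [relPU, Submodule.span_le]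
  rintro _ ⟨b, p, u, rfl⟩
  simp only [SetLike.mem_coe, Submodule.mem_comap, map_sub, tRR_tmul]
  have h : (b • p) ⊗ₜ[k] (u * w) - p ⊗ₜ[k] (e.ιA b * u * w) = gen e b p (u * w) := by
    rw [gen, mul_assoc]
  rw [h]
  exact gen_mem e b p (u * w)

include hPA in
lemma tGL_rel (x : L) : rel ≤ Submodule.comap (tGL e x) rel := by
  rw [relPU, Submodule.span_le]
  rintro _ ⟨b, p, u, rfl⟩
  simp only [SetLike.mem_coe, Submodule.mem_comap, map_sub]
  have hkey : (e.ιL x) * (e.ιA b * u) = e.ιA b * (e.ιL x * u) + e.ιA (anch k x b) * u := by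
    rw [← mul_assoc, ← mul_assoc, e.commA x b, add_mul]
  have h : tGL e x ((b • p) ⊗ₜ[k] u) - tGL e x (p ⊗ₜ[k] (e.ιA b * u)) =
      gen e b (op (e.ιL x) • p) u - gen e (anch k x b) p u - gen e b p (e.ιL x * u) := by
    simp only [tGL_tmul, gen, key1 e hPA x b p, TensorProduct.sub_tmul]
    rw [hkey, TensorProduct.tmul_add]
    abel
  rw [h]
  exact sub_mem (sub_mem (gen_mem e _ _ _) (gen_mem e _ _ _)) (gen_mem e _ _ _)

def qGA (a : A) : QQ →ₗ[k] QQ :=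
  Submodule.mapQ _ _ (tGA (k := k) (U := U) (P := P) a) (tGA_rel e a)

def qGL (x : L) : QQ →ₗ[k] QQ :=
  Submodule.mapQ _ _ (tGL e x) (tGL_rel e hPA x)

def qRR (w : U) : QQ →ₗ[k] QQ :=
  Submodule.mapQ _ _ (tRR (k := k) (P := P) w) (tRR_rel e w)

@[simp] lemma qGA_mk (a : A) (z : P ⊗[k] U) :
    qGA e a (Submodule.Quotient.mk z) =
      Submodule.Quotient.mk (tGA (k := k) (U := U) (P := P) a z) := by
  unfold qGA; exact Submodule.mapQ_apply _ _ _ z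

@[simp] lemma qGL_mk (x : L) (z : P ⊗[k] U) :
    qGL e hPA x (Submodule.Quotient.mk z) = Submodule.Quotient.mk (tGL e x z) := by
  unfold qGL; exact Submodule.mapQ_apply _ _ _ z

@[simp] lemma qRR_mk (w : U) (z : P ⊗[k] U) :
    qRR e w (Submodule.Quotient.mk z) =
      Submodule.Quotient.mk (tRR (k := k) (P := P) w z) := by
  unfold qRR; exact Submodule.mapQ_apply _ _ _ z

lemma qext {V : Type} [AddCommGroup V] [Module k V] {f g : QQ →ₗ[k] V}
    (h : ∀ (p : P) (u : U), f (Submodule.Quotient.mk (p ⊗ₜ[k] u)) =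
      g (Submodule.Quotient.mk (p ⊗ₜ[k] u))) : f = g := by
  refine LinearMap.ext fun z => ?_
  obtain ⟨w, rfl⟩ := Submodule.Quotient.mk_surjective _ z
  induction w using TensorProduct.induction_on with
  | zero => rw [Submodule.Quotient.mk_zero, map_zero, map_zero]
  | tmul p u => exact h p u
  | add y1 y2 h1 h2 => rw [Submodule.Quotient.mk_add, map_add, map_add, h1, h2]

-- ===== the three relations at the level of `End k QQ` =====

include hPA in
lemma relEnd_commA (x : L) (a : A) :
    qGA e a ∘ₗ qGL e hPA x = qGL e hPA x ∘ₗ qGA e a + qGA e (anch k x a) := by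
  apply qext e
  intro p u
  simp only [LinearMap.comp_apply, LinearMap.add_apply, qGA_mk, qGL_mk, tGL_tmul, tGA_tmul,
    map_sub, Submodule.Quotient.mk_sub, Submodule.Quotient.mk_add]
  have h : a • (op (e.ιL x) • p) = op (e.ιL x) • (a • p) + (anch k x a) • p := by
    rw [key1 e hPA x a p]; abel
  rw [h, TensorProduct.add_tmul, Submodule.Quotient.mk_add]
  abel

include hPA in
lemma relEnd_commL (x y : L) :
    qGL e hPA y ∘ₗ qGL e hPA x = qGL e hPA x ∘ₗ qGL e hPA y + qGL e hPA ⁅x, y⁆ := by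
  apply qext e
  intro p u
  simp only [LinearMap.comp_apply, LinearMap.add_apply, qGL_mk, tGL_tmul, map_sub,
    Submodule.Quotient.mk_sub, Submodule.Quotient.mk_add, op_smul_op_smul]
  have h1 : op (e.ιL x * e.ιL y) • p = op (e.ιL y * e.ιL x) • p + op (e.ιL ⁅x, y⁆) • p := by
    rw [e.commL x y, op_add, add_smul]
  have h2 : e.ιL y * (e.ιL x * u) =
      e.ιL x * (e.ιL y * u) - e.ιL ⁅x, y⁆ * u := by
    rw [← mul_assoc, ← mul_assoc, e.commL x y, add_mul]; abel
  rw [h1, h2, TensorProduct.add_tmul, TensorProduct.tmul_sub, Submodule.Quotient.mk_add,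
    Submodule.Quotient.mk_sub]
  abel

include hPA in
lemma relEnd_smul (a : A) (x : L) :
    qGL e hPA (a • x) = qGL e hPA x ∘ₗ qGA e a := by
  apply qext e
  intro p u
  simp only [LinearMap.comp_apply, qGL_mk, qGA_mk, tGA_tmul, tGL_tmul, map_sub,
    Submodule.Quotient.mk_sub, e.smul_def a x]
  have h1 : op (e.ιA a * e.ιL x) • p = op (e.ιL x) • (a • p) := by
    rw [← hPA a p, op_smul_op_smul]
  rw [h1, mul_assoc, ← mk_rel e a p (e.ιL x * u)]

-- ===== the algebra `BB` and the twisted action =====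

local notation "BB" => (Module.End k ((P ⊗[k] U) ⧸ relPU k A L U P e))ᵐᵒᵖ

def gAQ : A →ₐ[k] BB where
  toFun a := op (qGA e a)
  map_one' := by
    rw [← op_one]
    refine congrArg op (qext e fun p u => ?_)
    simp [Module.End.one_apply]
  map_mul' a b := by
    rw [← op_mul]
    refine congrArg op ?_
    rw [Module.End.mul_eq_comp]
    refine qext e fun p u => ?_
    simp only [qGA_mk, tGA_tmul, LinearMap.comp_apply, smul_smul]
    rw [mul_comm a b]
  map_zero' := by
    rw [show (0 : BB) = op 0 from rfl]
    refine congrArg op (qext e fun p u => ?_)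
    simp [TensorProduct.zero_tmul]
  map_add' a b := by
    rw [← op_add]
    refine congrArg op (qext e fun p u => ?_)
    simp only [qGA_mk, tGA_tmul, LinearMap.add_apply, add_smul, TensorProduct.add_tmul,
      Submodule.Quotient.mk_add]
  commutes' c := by
    rw [MulOpposite.algebraMap_apply]
    refine congrArg op (qext e fun p u => ?_)
    simp only [qGA_mk, tGA_tmul, Module.algebraMap_end_apply, algebraMap_smul,
      ← TensorProduct.smul_tmul', Submodule.Quotient.mk_smul]

def gLQ : L →ₗ[k] BB where
  toFun x := op (qGL e hPA x)
  map_add' x y := by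
    rw [← op_add]
    refine congrArg op (qext e fun p u => ?_)
    simp only [qGL_mk, tGL_tmul, LinearMap.add_apply, map_add, op_add, add_smul,
      TensorProduct.add_tmul, add_mul, TensorProduct.tmul_add, Submodule.Quotient.mk_sub,
      Submodule.Quotient.mk_add]
    abel
  map_smul' c x := by
    rw [RingHom.id_apply, ← op_smul]
    refine congrArg op (qext e fun p u => ?_)
    simp only [qGL_mk, tGL_tmul, LinearMap.smul_apply, map_smul, op_smul, smul_assoc,
      smul_mul_assoc, Submodule.Quotient.mk_sub, ← TensorProduct.smul_tmul',
      TensorProduct.tmul_smul, Submodule.Quotient.mk_smul, smul_sub]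

include hPA in
lemma balg_commA (x : L) (a : A) :
    gLQ e hPA x * gAQ e a = gAQ e a * gLQ e hPA x + gAQ e (anch k x a) := by
  show op (qGL e hPA x) * op (qGA e a) =
    op (qGA e a) * op (qGL e hPA x) + op (qGA e (anch k x a))
  rw [← op_mul, ← op_mul, ← op_add]
  refine congrArg op ?_
  rw [Module.End.mul_eq_comp, Module.End.mul_eq_comp]
  exact relEnd_commA e hPA x a

include hPA in
lemma balg_commL (x y : L) :
    gLQ e hPA x * gLQ e hPA y = gLQ e hPA y * gLQ e hPA x + gLQ e hPA ⁅x, y⁆ := by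
  show op (qGL e hPA x) * op (qGL e hPA y) =
    op (qGL e hPA y) * op (qGL e hPA x) + op (qGL e hPA ⁅x, y⁆)
  rw [← op_mul, ← op_mul, ← op_add]
  refine congrArg op ?_
  rw [Module.End.mul_eq_comp, Module.End.mul_eq_comp]
  exact relEnd_commL e hPA x y

include hPA in
lemma balg_smul (a : A) (x : L) :
    gLQ e hPA (a • x) = gAQ e a * gLQ e hPA x := by
  show op (qGL e hPA (a • x)) = op (qGA e a) * op (qGL e hPA x)
  rw [← op_mul]
  refine congrArg op ?_
  rw [Module.End.mul_eq_comp]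
  exact relEnd_smul e hPA a x

noncomputable def hU : U →ₐ[k] BB :=
  (e.universal _ (gAQ e) (gLQ e hPA) (balg_commA e hPA) (balg_commL e hPA)
    (balg_smul e hPA)).choose

lemma hU_spec :
    (∀ a, hU e hPA (e.ιA a) = gAQ e a) ∧ (∀ x, hU e hPA (e.ιL x) = gLQ e hPA x) :=
  (e.universal _ (gAQ e) (gLQ e hPA) (balg_commA e hPA) (balg_commL e hPA)
    (balg_smul e hPA)).choose_spec.1

lemma hU_unique (h' : U →ₐ[k] BB)
    (h1 : ∀ a, h' (e.ιA a) = gAQ e a) (h2 : ∀ x, h' (e.ιL x) = gLQ e hPA x) :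
    h' = hU e hPA :=
  (e.universal _ (gAQ e) (gLQ e hPA) (balg_commA e hPA) (balg_commL e hPA)
    (balg_smul e hPA)).choose_spec.2 h' ⟨h1, h2⟩

-- right multiplication as an algebra map into `BB`

def rop : U →ₐ[k] BB where
  toFun w := op (qRR e w)
  map_one' := by
    rw [← op_one]
    refine congrArg op (qext e fun p u => ?_)
    simp [Module.End.one_apply]
  map_mul' v w := by
    rw [← op_mul]
    refine congrArg op ?_
    rw [Module.End.mul_eq_comp]
    refine qext e fun p u => ?_
    simp only [qRR_mk, tRR_tmul, LinearMap.comp_apply, mul_assoc]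
  map_zero' := by
    rw [show (0 : BB) = op 0 from rfl]
    refine congrArg op (qext e fun p u => ?_)
    simp [TensorProduct.tmul_zero]
  map_add' v w := by
    rw [← op_add]
    refine congrArg op (qext e fun p u => ?_)
    simp only [qRR_mk, tRR_tmul, LinearMap.add_apply, mul_add, TensorProduct.tmul_add,
      Submodule.Quotient.mk_add]
  commutes' c := by
    rw [MulOpposite.algebraMap_apply]
    refine congrArg op (qext e fun p u => ?_)
    simp only [qRR_mk, tRR_tmul, Module.algebraMap_end_apply]
    rw [← Algebra.commutes c u, ← Algebra.smul_def, TensorProduct.tmul_smul,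
      Submodule.Quotient.mk_smul]


-- ===== the twisted action commutes with right multiplication =====

include hPA in
lemma hU_comm (v w : U) :
    (hU e hPA v).unop ∘ₗ qRR e w = qRR e w ∘ₗ (hU e hPA v).unop := by
  classical
  set C : Subalgebra k BB := Subalgebra.centralizer k (Set.range fun w' => op (qRR e w'))
    with hC
  have hAmem : ∀ a, gAQ e a ∈ C := by
    intro a
    rw [hC, Subalgebra.mem_centralizer_iff]
    rintro _ ⟨w', rfl⟩
    show op (qRR e w') * op (qGA e a) = op (qGA e a) * op (qRR e w')
    rw [← op_mul, ← op_mul]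
    refine congrArg op ?_
    rw [Module.End.mul_eq_comp, Module.End.mul_eq_comp]
    refine qext e fun p u => ?_
    simp only [LinearMap.comp_apply, qGA_mk, qRR_mk, tGA_tmul, tRR_tmul]
  have hLmem : ∀ x, gLQ e hPA x ∈ C := by
    intro x
    rw [hC, Subalgebra.mem_centralizer_iff]
    rintro _ ⟨w', rfl⟩
    show op (qRR e w') * op (qGL e hPA x) = op (qGL e hPA x) * op (qRR e w')
    rw [← op_mul, ← op_mul]
    refine congrArg op ?_
    rw [Module.End.mul_eq_comp, Module.End.mul_eq_comp]
    refine qext e fun p u => ?_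
    simp only [LinearMap.comp_apply, qGL_mk, qRR_mk, tGL_tmul, tRR_tmul, map_sub,
      Submodule.Quotient.mk_sub, mul_assoc]
  obtain ⟨h', ⟨h'A, h'L⟩, -⟩ :=
    e.universal C ((gAQ e).codRestrict C hAmem)
      (LinearMap.codRestrict C.toSubmodule (gLQ e hPA) hLmem)
      (fun x a => Subtype.ext (by
        simp only [MulMemClass.coe_mul, AddMemClass.coe_add, AlgHom.coe_codRestrict,
          LinearMap.codRestrict_apply]
        exact balg_commA e hPA x a))
      (fun x y => Subtype.ext (by
        simp only [MulMemClass.coe_mul, AddMemClass.coe_add, AlgHom.coe_codRestrict,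
          LinearMap.codRestrict_apply]
        exact balg_commL e hPA x y))
      (fun a x => Subtype.ext (by
        simp only [MulMemClass.coe_mul, AddMemClass.coe_add, AlgHom.coe_codRestrict,
          LinearMap.codRestrict_apply]
        exact balg_smul e hPA a x))
  have hval : C.val.comp h' = hU e hPA := by
    refine hU_unique e hPA _ (fun a => ?_) (fun x => ?_)
    · show C.val (h' (e.ιA a)) = _
      rw [h'A a]; rfl
    · show C.val (h' (e.ιL x)) = _
      rw [h'L x]; rfl
  have hmem : hU e hPA v ∈ C := by
    rw [← hval]; exact (h' v).2
  rw [hC, Subalgebra.mem_centralizer_iff] at hmem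
  have h2 := congrArg unop (hmem (op (qRR e w)) ⟨w, rfl⟩)
  rw [unop_mul, unop_mul, unop_op] at h2
  rw [Module.End.mul_eq_comp, Module.End.mul_eq_comp] at h2
  exact h2

-- ===== the involution β =====

def betaRep : P ⊗[k] U →ₗ[k] ((P ⊗[k] U) ⧸ relPU k A L U P e) :=
  TensorProduct.lift
  { toFun := fun p =>
      { toFun := fun u => (hU e hPA u).unop (Submodule.Quotient.mk (p ⊗ₜ[k] (1 : U)))
        map_add' := fun u v => by
          simp only [map_add, unop_add, LinearMap.add_apply]
        map_smul' := fun c u => by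
          simp only [map_smul, unop_smul, LinearMap.smul_apply, RingHom.id_apply] }
    map_add' := fun p p' => by
      refine LinearMap.ext fun u => ?_
      simp only [LinearMap.coe_mk, AddHom.coe_mk, LinearMap.add_apply]
      rw [← map_add, ← Submodule.Quotient.mk_add, ← TensorProduct.add_tmul]
    map_smul' := fun c p => by
      refine LinearMap.ext fun u => ?_
      simp only [LinearMap.coe_mk, AddHom.coe_mk, RingHom.id_apply, LinearMap.smul_apply]
      rw [← map_smul, ← Submodule.Quotient.mk_smul, ← TensorProduct.smul_tmul'] }

@[simp] lemma betaRep_tmul (p : P) (u : U) :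
    betaRep e hPA (p ⊗ₜ[k] u) =
      (hU e hPA u).unop (Submodule.Quotient.mk (p ⊗ₜ[k] (1 : U))) := rfl

lemma hU_mul_unop (v w : U) (z : (P ⊗[k] U) ⧸ relPU k A L U P e) :
    (hU e hPA (v * w)).unop z = (hU e hPA w).unop ((hU e hPA v).unop z) := by
  rw [map_mul, unop_mul, Module.End.mul_eq_comp, LinearMap.comp_apply]

lemma betaRep_ker : rel ≤ LinearMap.ker (betaRep e hPA) := by
  refine Submodule.span_le.mpr ?_
  rintro _ ⟨a, p, u, rfl⟩
  simp only [SetLike.mem_coe, LinearMap.mem_ker, map_sub, betaRep_tmul]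
  rw [hU_mul_unop e hPA (e.ιA a) u, (hU_spec e hPA).1 a]
  show (hU e hPA u).unop (Submodule.Quotient.mk ((a • p) ⊗ₜ[k] (1:U))) -
    (hU e hPA u).unop ((qGA e a) (Submodule.Quotient.mk (p ⊗ₜ[k] (1:U)))) = 0
  rw [qGA_mk, tGA_tmul, sub_self]

def beta : ((P ⊗[k] U) ⧸ relPU k A L U P e) →ₗ[k] ((P ⊗[k] U) ⧸ relPU k A L U P e) :=
  Submodule.liftQ _ (betaRep e hPA) (betaRep_ker e hPA)

@[simp] lemma beta_mk (p : P) (u : U) :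
    beta e hPA (Submodule.Quotient.mk (p ⊗ₜ[k] u)) =
      (hU e hPA u).unop (Submodule.Quotient.mk (p ⊗ₜ[k] (1 : U))) := by
  rw [beta, Submodule.liftQ_apply, betaRep_tmul]

include hPA in
lemma beta_gA (a : A) :
    beta e hPA ∘ₗ qGA e a = qRR e (e.ιA a) ∘ₗ beta e hPA := by
  refine qext e fun p u => ?_
  simp only [LinearMap.comp_apply, qGA_mk, tGA_tmul, beta_mk]
  have h1 : (Submodule.Quotient.mk ((a • p) ⊗ₜ[k] (1:U)) : (P ⊗[k] U) ⧸ relPU k A L U P e) =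
      qRR e (e.ιA a) (Submodule.Quotient.mk (p ⊗ₜ[k] (1:U))) := by
    rw [qRR_mk, tRR_tmul, one_mul, ← mul_one (e.ιA a), mk_rel e a p]
  rw [h1]
  simpa using DFunLike.congr_fun (hU_comm e hPA u (e.ιA a))
    (Submodule.Quotient.mk (p ⊗ₜ[k] (1 : U)))

include hPA in
lemma beta_gL (x : L) :
    beta e hPA ∘ₗ qGL e hPA x = qRR e (e.ιL x) ∘ₗ beta e hPA := by
  refine qext e fun p u => ?_
  simp only [LinearMap.comp_apply, qGL_mk, tGL_tmul, Submodule.Quotient.mk_sub, map_sub,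
    beta_mk]
  rw [hU_mul_unop e hPA (e.ιL x) u, (hU_spec e hPA).2 x]
  show (hU e hPA u).unop (Submodule.Quotient.mk ((op (e.ιL x) • p) ⊗ₜ[k] (1:U))) -
      (hU e hPA u).unop ((qGL e hPA x) (Submodule.Quotient.mk (p ⊗ₜ[k] (1:U)))) =
      qRR e (e.ιL x) ((hU e hPA u).unop (Submodule.Quotient.mk (p ⊗ₜ[k] (1:U))))
  rw [qGL_mk, tGL_tmul, Submodule.Quotient.mk_sub, map_sub, sub_sub_cancel, mul_one]
  have h1 : (Submodule.Quotient.mk (p ⊗ₜ[k] (e.ιL x)) : (P ⊗[k] U) ⧸ relPU k A L U P e) =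
      qRR e (e.ιL x) (Submodule.Quotient.mk (p ⊗ₜ[k] (1:U))) := by
    rw [qRR_mk, tRR_tmul, one_mul]
  rw [h1]
  simpa using DFunLike.congr_fun (hU_comm e hPA u (e.ιL x))
    (Submodule.Quotient.mk (p ⊗ₜ[k] (1 : U)))


-- ===== rop relations =====

lemma rop_commA (x : L) (a : A) :
    rop (P := P) e (e.ιL x) * rop (P := P) e (e.ιA a) =
      rop (P := P) e (e.ιA a) * rop (P := P) e (e.ιL x) +
        rop (P := P) e (e.ιA (anch k x a)) := by
  rw [← map_mul (rop (P := P) e), ← map_mul (rop (P := P) e),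
    ← map_add (rop (P := P) e), e.commA]

lemma rop_commL (x y : L) :
    rop (P := P) e (e.ιL x) * rop (P := P) e (e.ιL y) =
      rop (P := P) e (e.ιL y) * rop (P := P) e (e.ιL x) +
        rop (P := P) e (e.ιL ⁅x, y⁆) := by
  rw [← map_mul (rop (P := P) e), ← map_mul (rop (P := P) e),
    ← map_add (rop (P := P) e), e.commL]

lemma rop_smul (a : A) (x : L) :
    rop (P := P) e (e.ιL (a • x)) = rop (P := P) e (e.ιA a) * rop (P := P) e (e.ιL x) := by
  rw [← map_mul (rop (P := P) e), ← e.smul_def]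

-- ===== the intertwining subalgebra =====

def Dalg : Subalgebra k (BB × BB) where
  carrier := {d | beta e hPA ∘ₗ d.1.unop = d.2.unop ∘ₗ beta e hPA}
  mul_mem' := by
    intro x y hx hy
    simp only [Set.mem_setOf_eq] at hx hy ⊢
    have hx' := DFunLike.congr_fun hx
    have hy' := DFunLike.congr_fun hy
    simp only [LinearMap.comp_apply] at hx' hy'
    refine LinearMap.ext fun z => ?_
    simp only [LinearMap.comp_apply, Prod.fst_mul, Prod.snd_mul, unop_mul,
      Module.End.mul_apply]
    rw [hy', hx']
  one_mem' := by
    simp only [Set.mem_setOf_eq, Prod.fst_one, Prod.snd_one, unop_one]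
    refine LinearMap.ext fun z => ?_
    simp only [LinearMap.comp_apply, Module.End.one_apply]
  add_mem' := by
    intro x y hx hy
    simp only [Set.mem_setOf_eq] at hx hy ⊢
    have hx' := DFunLike.congr_fun hx
    have hy' := DFunLike.congr_fun hy
    simp only [LinearMap.comp_apply] at hx' hy'
    refine LinearMap.ext fun z => ?_
    simp only [LinearMap.comp_apply, Prod.fst_add, Prod.snd_add, unop_add,
      LinearMap.add_apply, map_add]
    rw [hx', hy']
  zero_mem' := by
    simp only [Set.mem_setOf_eq, Prod.fst_zero, Prod.snd_zero, unop_zero]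
    refine LinearMap.ext fun z => ?_
    simp only [LinearMap.comp_apply, LinearMap.zero_apply, map_zero]
  algebraMap_mem' := fun c => by
    show beta e hPA ∘ₗ (algebraMap k (BB × BB) c).1.unop =
      (algebraMap k (BB × BB) c).2.unop ∘ₗ beta e hPA
    refine LinearMap.ext fun z => ?_
    show beta e hPA ((algebraMap k BB c).unop z) = (algebraMap k BB c).unop (beta e hPA z)
    rw [MulOpposite.algebraMap_apply, unop_op]
    simp only [LinearMap.comp_apply, Module.algebraMap_end_apply, map_smul]

lemma mem_Dalg (d : BB × BB) :
    d ∈ Dalg e hPA ↔ beta e hPA ∘ₗ d.1.unop = d.2.unop ∘ₗ beta e hPA := Iff.rfl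

include hPA in
lemma beta_hU (v : U) :
    beta e hPA ∘ₗ (hU e hPA v).unop = qRR e v ∘ₗ beta e hPA := by
  classical
  have memA : ∀ a, (AlgHom.prod (gAQ e) ((rop e).comp e.ιA)) a ∈ Dalg e hPA := by
    intro a
    rw [mem_Dalg]
    show beta e hPA ∘ₗ (op (qGA e a)).unop = (op (qRR e (e.ιA a))).unop ∘ₗ beta e hPA
    rw [unop_op, unop_op]
    exact beta_gA e hPA a
  have memL : ∀ x, (LinearMap.prod (gLQ e hPA) ((rop e).toLinearMap ∘ₗ e.ιL)) x
      ∈ Dalg e hPA := by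
    intro x
    rw [mem_Dalg]
    show beta e hPA ∘ₗ (op (qGL e hPA x)).unop = (op (qRR e (e.ιL x))).unop ∘ₗ beta e hPA
    rw [unop_op, unop_op]
    exact beta_gL e hPA x
  obtain ⟨H, ⟨HA, HL⟩, -⟩ :=
    e.universal (Dalg e hPA)
      ((AlgHom.prod (gAQ e) ((rop e).comp e.ιA)).codRestrict (Dalg e hPA) memA)
      (LinearMap.codRestrict (Subalgebra.toSubmodule (Dalg e hPA))
        (LinearMap.prod (gLQ e hPA) ((rop e).toLinearMap ∘ₗ e.ιL)) memL)
      (fun x a => Subtype.ext (by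
        simp only [MulMemClass.coe_mul, AddMemClass.coe_add, AlgHom.coe_codRestrict,
          LinearMap.codRestrict_apply, AlgHom.prod_apply, LinearMap.prod_apply,
          Pi.prod, AlgHom.coe_comp, LinearMap.coe_comp, Function.comp_apply,
          AlgHom.toLinearMap_apply, Prod.mk_mul_mk, Prod.mk_add_mk, Prod.mk.injEq]
        refine Prod.ext ?_ ?_
        · exact balg_commA e hPA x a
        · exact rop_commA e x a))
      (fun x y => Subtype.ext (by
        simp only [MulMemClass.coe_mul, AddMemClass.coe_add, AlgHom.coe_codRestrict,
          LinearMap.codRestrict_apply, AlgHom.prod_apply, LinearMap.prod_apply,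
          Pi.prod, AlgHom.coe_comp, LinearMap.coe_comp, Function.comp_apply,
          AlgHom.toLinearMap_apply, Prod.mk_mul_mk, Prod.mk_add_mk, Prod.mk.injEq]
        refine Prod.ext ?_ ?_
        · exact balg_commL e hPA x y
        · exact rop_commL e x y))
      (fun a x => Subtype.ext (by
        simp only [MulMemClass.coe_mul, AddMemClass.coe_add, AlgHom.coe_codRestrict,
          LinearMap.codRestrict_apply, AlgHom.prod_apply, LinearMap.prod_apply,
          Pi.prod, AlgHom.coe_comp, LinearMap.coe_comp, Function.comp_apply,
          AlgHom.toLinearMap_apply, Prod.mk_mul_mk, Prod.mk.injEq]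
        refine Prod.ext ?_ ?_
        · exact balg_smul e hPA a x
        · exact rop_smul e a x))
  -- first projection agrees with `hU`
  have h1 : (AlgHom.fst k BB BB).comp ((Dalg e hPA).val.comp H) = hU e hPA := by
    refine hU_unique e hPA _ (fun a => ?_) (fun x => ?_)
    · show ((H (e.ιA a) : BB × BB)).1 = _
      rw [HA a]
      rfl
    · show ((H (e.ιL x) : BB × BB)).1 = _
      rw [HL x]
      rfl
  -- second projection agrees with `rop`
  obtain ⟨hr, ⟨hrA, hrL⟩, hruniq⟩ :=
    e.universal BB ((rop e).comp e.ιA) ((rop e).toLinearMap ∘ₗ e.ιL)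
      (fun x a => rop_commA e x a) (fun x y => rop_commL e x y)
      (fun a x => rop_smul e a x)
  have h2a : (AlgHom.snd k BB BB).comp ((Dalg e hPA).val.comp H) = hr := by
    refine hruniq _ ⟨fun a => ?_, fun x => ?_⟩
    · show ((H (e.ιA a) : BB × BB)).2 = _
      rw [HA a]
      rfl
    · show ((H (e.ιL x) : BB × BB)).2 = _
      rw [HL x]
      rfl
  have h2b : rop e = hr := by
    refine hruniq _ ⟨fun a => rfl, fun x => rfl⟩
  have hmem := (H v).2
  rw [mem_Dalg] at hmem
  have e1 : ((H v : BB × BB)).1 = hU e hPA v := by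
    rw [← h1]; rfl
  have e2 : ((H v : BB × BB)).2 = rop e v := by
    rw [h2b]; rw [← h2a]; rfl
  rw [e1, e2] at hmem
  rw [hmem]
  rfl

include hPA in
lemma beta_beta (z : (P ⊗[k] U) ⧸ relPU k A L U P e) :
    beta e hPA (beta e hPA z) = z := by
  have key : (beta e hPA) ∘ₗ (beta e hPA) = LinearMap.id := by
    refine qext e fun p u => ?_
    rw [LinearMap.comp_apply, LinearMap.id_apply, beta_mk]
    have h1 := DFunLike.congr_fun (beta_hU e hPA u) (Submodule.Quotient.mk (p ⊗ₜ[k] (1:U)))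
    simp only [LinearMap.comp_apply] at h1
    rw [h1, beta_mk, map_one, unop_one, Module.End.one_apply, qRR_mk, tRR_tmul, one_mul]
  exact DFunLike.congr_fun key z

include hPA in
lemma beta_qRR (v : U) (z : (P ⊗[k] U) ⧸ relPU k A L U P e) :
    beta e hPA (qRR e v z) = (hU e hPA v).unop (beta e hPA z) := by
  have h1 := DFunLike.congr_fun (beta_hU e hPA v) (beta e hPA z)
  simp only [LinearMap.comp_apply] at h1
  rw [beta_beta e hPA z] at h1
  rw [← h1, beta_beta]


-- ===== finite projective splitting machinery =====

variable {m : ℕ}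

def sRep (g : P →ₗ[A] (Fin m → A)) : P ⊗[k] U →ₗ[k] (Fin m → U) :=
  LinearMap.pi fun j => TensorProduct.lift
    ((LinearMap.mul k U) ∘ₗ (e.ιA.toLinearMap ∘ₗ (LinearMap.proj j ∘ₗ (g.restrictScalars k))))

@[simp] lemma sRep_tmul (g : P →ₗ[A] (Fin m → A)) (p : P) (u : U) :
    sRep e g (p ⊗ₜ[k] u) = fun j => e.ιA (g p j) * u := by
  funext j
  simp [sRep, LinearMap.mul_apply']

lemma sRep_ker (g : P →ₗ[A] (Fin m → A)) : rel ≤ LinearMap.ker (sRep e g) := by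
  refine Submodule.span_le.mpr ?_
  rintro _ ⟨a, p, u, rfl⟩
  simp only [SetLike.mem_coe, LinearMap.mem_ker, map_sub, sRep_tmul]
  funext j
  simp only [Pi.sub_apply, Pi.zero_apply, map_smul, Pi.smul_apply, smul_eq_mul, map_mul]
  rw [← map_mul, mul_comm a (g p j), map_mul, mul_assoc, sub_self]

def sPl (g : P →ₗ[A] (Fin m → A)) : ((P ⊗[k] U) ⧸ relPU k A L U P e) →ₗ[k] (Fin m → U) :=
  Submodule.liftQ _ (sRep e g) (sRep_ker e g)

@[simp] lemma sPl_mk (g : P →ₗ[A] (Fin m → A)) (z : P ⊗[k] U) :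
    sPl e g (Submodule.Quotient.mk z) = sRep e g z := by
  rw [sPl, Submodule.liftQ_apply]

def rRep0 (q : Fin m → P) : (Fin m → U) →ₗ[k] P ⊗[k] U :=
  ∑ j, (TensorProduct.mk k P U (q j)) ∘ₗ LinearMap.proj j

@[simp] lemma rRep0_apply (q : Fin m → P) (v : Fin m → U) :
    rRep0 q v = ∑ j, (q j) ⊗ₜ[k] (v j) := by
  simp [rRep0, LinearMap.sum_apply]

lemma mk_rRep0_sRep (g : P →ₗ[A] (Fin m → A)) (q : Fin m → P)
    (hq : ∀ p : P, ∑ j, g p j • q j = p) (z : P ⊗[k] U) :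
    (Submodule.Quotient.mk (rRep0 q (sRep e g z)) : (P ⊗[k] U) ⧸ relPU k A L U P e) =
      Submodule.Quotient.mk z := by
  induction z using TensorProduct.induction_on with
  | zero => rw [map_zero, map_zero]
  | tmul p u =>
      rw [sRep_tmul, rRep0_apply]
      rw [show (Submodule.Quotient.mk (∑ j, q j ⊗ₜ[k] (e.ιA (g p j) * u)) :
          (P ⊗[k] U) ⧸ relPU k A L U P e) =
        ∑ j, Submodule.Quotient.mk (q j ⊗ₜ[k] (e.ιA (g p j) * u)) from
          map_sum ((relPU k A L U P e).mkQ) _ _]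
      have h1 : ∀ j : Fin m, (Submodule.Quotient.mk (q j ⊗ₜ[k] (e.ιA (g p j) * u)) :
          (P ⊗[k] U) ⧸ relPU k A L U P e) =
          Submodule.Quotient.mk (((g p j) • q j) ⊗ₜ[k] u) :=
        fun j => (mk_rel e (g p j) (q j) u).symm
      rw [Finset.sum_congr rfl fun j _ => h1 j]
      rw [show (∑ j, Submodule.Quotient.mk (((g p j) • q j) ⊗ₜ[k] u) :
          (P ⊗[k] U) ⧸ relPU k A L U P e) =
        Submodule.Quotient.mk (∑ j, ((g p j) • q j) ⊗ₜ[k] u) from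
          (map_sum ((relPU k A L U P e).mkQ) _ _).symm]
      rw [← TensorProduct.sum_tmul, hq p]
  | add z1 z2 h1 h2 =>
      rw [map_add, map_add, Submodule.Quotient.mk_add, Submodule.Quotient.mk_add, h1, h2]

def sigma (g : P →ₗ[A] (Fin m → A)) (q : Fin m → P) :
    ((P ⊗[k] U) ⧸ relPU k A L U P e) →ₗ[k] P ⊗[k] U :=
  Submodule.liftQ _ ((rRep0 q) ∘ₗ sRep e g) (by
    intro z hz
    have h0 : sRep e g z = 0 := sRep_ker e g hz
    simp only [LinearMap.mem_ker, LinearMap.comp_apply, h0, map_zero])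

@[simp] lemma sigma_mk (g : P →ₗ[A] (Fin m → A)) (q : Fin m → P) (z : P ⊗[k] U) :
    sigma e g q (Submodule.Quotient.mk z) = rRep0 q (sRep e g z) := by
  rw [sigma, Submodule.liftQ_apply, LinearMap.comp_apply]

lemma mk_sigma (g : P →ₗ[A] (Fin m → A)) (q : Fin m → P)
    (hq : ∀ p : P, ∑ j, g p j • q j = p) (w : (P ⊗[k] U) ⧸ relPU k A L U P e) :
    (Submodule.Quotient.mk (sigma e g q w) : (P ⊗[k] U) ⧸ relPU k A L U P e) = w := by
  obtain ⟨z, rfl⟩ := Submodule.Quotient.mk_surjective _ w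
  rw [sigma_mk, mk_rRep0_sRep e g q hq]

def rPlQ (q : Fin m → P) : (Fin m → U) →ₗ[k] ((P ⊗[k] U) ⧸ relPU k A L U P e) :=
  (relPU k A L U P e).mkQ ∘ₗ rRep0 q

lemma rPlQ_mul (q : Fin m → P) (v : Fin m → U) (w : U) :
    rPlQ e q (fun j => v j * w) = qRR e w (rPlQ e q v) := by
  simp only [rPlQ, LinearMap.comp_apply, rRep0_apply, Submodule.mkQ_apply, map_sum]
  refine Finset.sum_congr rfl fun j _ => ?_
  rw [qRR_mk, tRR_tmul]

lemma rPlQ_sPl (g : P →ₗ[A] (Fin m → A)) (q : Fin m → P)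
    (hq : ∀ p : P, ∑ j, g p j • q j = p) (w : (P ⊗[k] U) ⧸ relPU k A L U P e) :
    rPlQ e q (sPl e g w) = w := by
  obtain ⟨z, rfl⟩ := Submodule.Quotient.mk_surjective _ w
  rw [sPl_mk, rPlQ, LinearMap.comp_apply, Submodule.mkQ_apply, mk_rRep0_sRep e g q hq]

lemma sPl_qRR (g : P →ₗ[A] (Fin m → A)) (v : U) (w : (P ⊗[k] U) ⧸ relPU k A L U P e) :
    sPl e g (qRR e v w) = fun j => sPl e g w j * v := by
  have hmap : sPl e g ∘ₗ qRR e v =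
      (LinearMap.pi fun j => LinearMap.mulRight k v ∘ₗ LinearMap.proj j) ∘ₗ sPl e g := by
    refine qext e fun p u => ?_
    funext j
    simp only [LinearMap.comp_apply, qRR_mk, tRR_tmul, sPl_mk, sRep_tmul,
      LinearMap.pi_apply, LinearMap.mulRight_apply, LinearMap.proj_apply, mul_assoc]
  have h1 := DFunLike.congr_fun hmap w
  simp only [LinearMap.comp_apply] at h1
  rw [h1]
  funext j
  simp [LinearMap.pi_apply]


end

end TTP

open TTP

/-- Let `L` be a `(k,A)`-Lie algebra with enveloping algebra `U`.
If `P` is a right `U`-module which is finitely generated projective as an `A`-module,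
then `P ⊗_A U`, equipped with the right `U`-module structure
`(p ⊗ Q)·λ = pλ ⊗ Q − p ⊗ λQ` (`λ ∈ L`, and `(p ⊗ Q)·a = pa ⊗ Q` for `a ∈ A`), is a
projective right `U`-module: it is a direct summand of a finite free right `U`-module,
i.e. there are right `U`-linear maps `s : P ⊗_A U → U^m` and `r : U^m → P ⊗_A U` with
`r ∘ s = id`.  (Right `U`-linearity is expressed on the algebra generators of `U`.) -/
theorem twisted_tensor_projective
    (k A L U P : Type) [CommRing k] [CommRing A] [Algebra k A]
    [LieRing L] [LieAlgebra k L] [Module A L] [IsScalarTower k A L] [LieRinehart k A L]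
    [Ring U] [Algebra k U] (e : EnvAlg k A L U)
    [AddCommGroup P] [Module k P] [Module A P] [IsScalarTower k A P]
    [Module Uᵐᵒᵖ P] [IsScalarTower k Uᵐᵒᵖ P]
    (hPA : ∀ (a : A) (p : P), op (e.ιA a) • p = a • p)
    [Module.Finite A P] [Module.Projective A P] :
    ∃ (m : ℕ)
      (s : (P ⊗[k] U) ⧸ relPU k A L U P e →ₗ[k] (Fin m → U))
      (r₀ : (Fin m → U) →ₗ[k] (P ⊗[k] U)),
      -- `s` is right `U`-linear :
      (∀ (a : A) (z : P ⊗[k] U),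
        s (Submodule.Quotient.mk (TensorProduct.map (lact (M := P) a) LinearMap.id z)) =
          fun j => s (Submodule.Quotient.mk z) j * e.ιA a) ∧
      (∀ (x : L) (z : P ⊗[k] U),
        s (Submodule.Quotient.mk
            (TensorProduct.map (lact (M := P) (op (e.ιL x))) LinearMap.id z -
             TensorProduct.map LinearMap.id (LinearMap.mulLeft k (e.ιL x)) z)) =
          fun j => s (Submodule.Quotient.mk z) j * e.ιL x) ∧
      -- `r` (the descent of `r₀`) is right `U`-linear :
      (∀ (a : A) (v : Fin m → U),
        r₀ (fun j => v j * e.ιA a) -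
          TensorProduct.map (lact (M := P) a) LinearMap.id (r₀ v)
          ∈ relPU k A L U P e) ∧
      (∀ (x : L) (v : Fin m → U),
        r₀ (fun j => v j * e.ιL x) -
          (TensorProduct.map (lact (M := P) (op (e.ιL x))) LinearMap.id (r₀ v) -
           TensorProduct.map LinearMap.id (LinearMap.mulLeft k (e.ιL x)) (r₀ v))
          ∈ relPU k A L U P e) ∧
      -- `r ∘ s = id` :
      (∀ z : P ⊗[k] U,
        (Submodule.Quotient.mk (r₀ (s (Submodule.Quotient.mk z))) :
          (P ⊗[k] U) ⧸ relPU k A L U P e) = Submodule.Quotient.mk z) := by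
  classical
  obtain ⟨m, f, hf⟩ := Module.Finite.exists_fin' A P
  obtain ⟨g, hg⟩ := Module.projective_lifting_property f LinearMap.id hf
  set q : Fin m → P := fun j => f (Pi.single j 1) with hqdef
  have hfv : ∀ v : Fin m → A, f v = ∑ j, v j • q j := by
    intro v
    have h1 : v = ∑ j, Pi.single j (v j) := (Finset.univ_sum_single v).symm
    conv_lhs => rw [h1]
    rw [map_sum]
    refine Finset.sum_congr rfl fun j _ => ?_
    have h2 : (Pi.single j (v j) : Fin m → A) = v j • (Pi.single j (1 : A) : Fin m → A) := by
      rw [← Pi.single_smul, smul_eq_mul, mul_one]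
    rw [h2, map_smul]
  have hq : ∀ p : P, ∑ j, g p j • q j = p := by
    intro p
    rw [← hfv (g p)]
    have := DFunLike.congr_fun hg p
    simpa using this
  refine ⟨m, sPl e g ∘ₗ beta e hPA, sigma e g q ∘ₗ (beta e hPA ∘ₗ rPlQ e q),
    ?_, ?_, ?_, ?_, ?_⟩
  · -- s is A-linear
    intro a z
    have h0 : TensorProduct.map (lact (M := P) a) LinearMap.id z = tGA (k := k) (U := U) a z := rfl
    rw [h0, ← qGA_mk e a z]
    simp only [LinearMap.comp_apply]
    have hb := DFunLike.congr_fun (beta_gA e hPA a) (Submodule.Quotient.mk z)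
    simp only [LinearMap.comp_apply] at hb
    rw [hb, sPl_qRR e g]
  · -- s is L-linear
    intro x z
    have h0 : TensorProduct.map (lact (M := P) (op (e.ιL x))) LinearMap.id z -
        TensorProduct.map LinearMap.id (LinearMap.mulLeft k (e.ιL x)) z = tGL e x z := rfl
    rw [h0, ← qGL_mk e hPA x z]
    simp only [LinearMap.comp_apply]
    have hb := DFunLike.congr_fun (beta_gL e hPA x) (Submodule.Quotient.mk z)
    simp only [LinearMap.comp_apply] at hb
    rw [hb, sPl_qRR e g]
  · -- r is A-linear
    intro a v
    rw [← Submodule.Quotient.eq]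
    simp only [LinearMap.comp_apply]
    have h0 : TensorProduct.map (lact (M := P) a) LinearMap.id
        (sigma e g q (beta e hPA (rPlQ e q v))) =
        tGA (k := k) (U := U) a (sigma e g q (beta e hPA (rPlQ e q v))) := rfl
    rw [h0, mk_sigma e g q hq, ← qGA_mk e a, mk_sigma e g q hq, rPlQ_mul e q v (e.ιA a),
      beta_qRR e hPA]
    rw [(hU_spec e hPA).1 a]
    rfl
  · -- r is L-linear
    intro x v
    rw [← Submodule.Quotient.eq]
    simp only [LinearMap.comp_apply]
    have h0 : TensorProduct.map (lact (M := P) (op (e.ιL x))) LinearMap.id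
          (sigma e g q (beta e hPA (rPlQ e q v))) -
        TensorProduct.map LinearMap.id (LinearMap.mulLeft k (e.ιL x))
          (sigma e g q (beta e hPA (rPlQ e q v))) =
        tGL e x (sigma e g q (beta e hPA (rPlQ e q v))) := rfl
    rw [h0, mk_sigma e g q hq, ← qGL_mk e hPA x, mk_sigma e g q hq, rPlQ_mul e q v (e.ιL x),
      beta_qRR e hPA]
    rw [(hU_spec e hPA).2 x]
    rfl
  · -- r ∘ s = id
    intro z
    simp only [LinearMap.comp_apply]
    rw [mk_sigma e g q hq, rPlQ_sPl e g q hq, beta_beta e hPA]
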